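/- arXiv:2410.04922 — 2 statements merged into one kernel-verified Lean document; each statement's English description precedes it below -/
import Mathlib

section
/- Let p, d, d₀, L be positive integers with d₀ ≤ p. Let A₀ ∈ 𝒜_{p×d₀}. On a probability space let P₁, …, P_L be independent and identically distributed random real p×d matrices such that almost surely Pℓᵀ Pℓ = I_d for every ℓ ∈ {1, …, L}. Set Π^∞ := 𝔼[P₁ P₁ᵀ] (entrywise expectation) and Π̂ := (1/L) Σ_{ℓ=1}^L Pℓ Pℓᵀ. Let Â^L be a random p×d₀ matrix, chosen measurably, whose columns are, for each outcome, orthonormal eigenvectors of the symmetric matrix Π̂ corresponding to its d₀ largest eigenvalues (counted with multiplicity). Then 𝔼[ d_F(𝒮(Â^L), 𝒮(A₀)) ] ≤ 2 d₀^{1/2} ‖Π^∞ − A₀A₀ᵀ‖_op + 2 d₀^{1/2} (2π)^{1/2} p / L^{1/2}. -/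
/-!
Write `E = Π̂ - A₀A₀ᵀ`. Since `A₀A₀ᵀ` is positive semidefinite of rank `d₀`, Weyl's inequality
puts every eigenvalue of `Π̂` outside the top `d₀` into `[-‖E‖, ‖E‖]`. The complementary spectral
projection `Q = 1 - Â Âᵀ` then satisfies `‖Q A₀‖ ≤ 2‖E‖` (Davis–Kahan), and
`d_F(Â, A₀)² = ‖Q A₀‖_F² ≤ d₀ ‖Q A₀‖²`, so that
`d_F ≤ 2√d₀ (‖Π^∞ - A₀A₀ᵀ‖ + ‖Π̂ - Π^∞‖_F)` pointwise. Each entry of `Π̂` is the mean of `L`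
independent variables bounded by `1` whose expectation is the entry of `Π^∞`, hence
`𝔼 ‖Π̂ - Π^∞‖_F² ≤ p² / L`, and Jensen's inequality gives `𝔼 ‖Π̂ - Π^∞‖_F ≤ p / √L`.
-/

open Matrix MeasureTheory ProbabilityTheory
open scoped MeasureTheory ProbabilityTheory

/-- Matrices over `ℝ` carry the product (entrywise Borel) σ-algebra. -/
instance matrixMeasurableSpace {m n : ℕ} : MeasurableSpace (Matrix (Fin m) (Fin n) ℝ) :=
  (inferInstance : MeasurableSpace (Fin m → Fin n → ℝ))

/-- Squared Frobenius norm of a real matrix. -/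
noncomputable def frobSq {m n : ℕ} (M : Matrix (Fin m) (Fin n) ℝ) : ℝ :=
  ∑ i, ∑ j, (M i j) ^ 2

/-- The distance `d_F(𝒮(Â), 𝒮(A))`, defined by `d_F² = (1/2) ‖Â Âᵀ − A Aᵀ‖_F²`. -/
noncomputable def dF {p d dhat : ℕ} (Ahat : Matrix (Fin p) (Fin dhat) ℝ)
    (A : Matrix (Fin p) (Fin d) ℝ) : ℝ :=
  Real.sqrt ((1 / 2) * frobSq (Ahat * Ahatᵀ - A * Aᵀ))

/-- The ℓ²→ℓ² operator norm (spectral norm) of a real square matrix. -/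
noncomputable def opNorm {p : ℕ} (M : Matrix (Fin p) (Fin p) ℝ) : ℝ :=
  ‖LinearMap.toContinuousLinearMap (Matrix.toEuclideanLin M)‖

open scoped Matrix.Norms.L2Operator

section L2OperatorNorm

lemma opNorm_eq_norm {p : ℕ} (M : Matrix (Fin p) (Fin p) ℝ) : opNorm M = ‖M‖ := rfl

lemma dotProduct_self_eq_norm_sq {n : Type*} [Fintype n] (v : n → ℝ) :
    v ⬝ᵥ v = ‖WithLp.toLp 2 v‖ ^ 2 := by
  rw [← real_inner_self_eq_norm_sq, EuclideanSpace.inner_toLp_toLp]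
  simp

lemma dotProduct_self_nonneg {n : Type*} [Fintype n] (v : n → ℝ) : 0 ≤ v ⬝ᵥ v := by
  rw [dotProduct_self_eq_norm_sq]; positivity

lemma dotProduct_self_pos {n : Type*} [Fintype n] {v : n → ℝ} (hv : v ≠ 0) : 0 < v ⬝ᵥ v := by
  rw [dotProduct_self_eq_norm_sq]
  exact pow_pos (norm_pos_iff.2 fun h => hv (congrArg WithLp.ofLp h)) 2

variable {m n : Type*} [Fintype m] [Fintype n] [DecidableEq n]

lemma norm_toLp_mulVec_le (A : Matrix m n ℝ) (v : n → ℝ) :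
    ‖WithLp.toLp 2 (A *ᵥ v)‖ ≤ ‖A‖ * ‖WithLp.toLp 2 v‖ :=
  A.l2_opNorm_mulVec (WithLp.toLp 2 v)

lemma mulVec_dotProduct_self_le (A : Matrix m n ℝ) (v : n → ℝ) :
    (A *ᵥ v) ⬝ᵥ (A *ᵥ v) ≤ ‖A‖ ^ 2 * (v ⬝ᵥ v) := by
  rw [dotProduct_self_eq_norm_sq, dotProduct_self_eq_norm_sq, ← mul_pow]
  gcongr
  exact norm_toLp_mulVec_le A v

lemma abs_dotProduct_mulVec_le (A : Matrix n n ℝ) (v : n → ℝ) :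
    |v ⬝ᵥ (A *ᵥ v)| ≤ ‖A‖ * (v ⬝ᵥ v) := by
  have hinner : v ⬝ᵥ (A *ᵥ v) = inner ℝ (WithLp.toLp 2 (A *ᵥ v)) (WithLp.toLp 2 v) := by
    rw [EuclideanSpace.inner_toLp_toLp]; simp
  rw [hinner, dotProduct_self_eq_norm_sq, sq, ← mul_assoc]
  exact (abs_real_inner_le_norm _ _).trans
    (mul_le_mul_of_nonneg_right (norm_toLp_mulVec_le A v) (norm_nonneg _))

lemma abs_apply_le_norm (A : Matrix m n ℝ) (i : m) (j : n) : |A i j| ≤ ‖A‖ := by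
  have hcol := norm_toLp_mulVec_le A (Pi.single j 1)
  have hsingle : ‖WithLp.toLp 2 (Pi.single (M := fun _ : n => ℝ) j 1)‖ = 1 := by simp
  rw [mulVec_single_one, hsingle, mul_one] at hcol
  exact (PiLp.norm_apply_le _ i).trans hcol

lemma norm_le_one_of_transpose_mul_self {A : Matrix m n ℝ} (hA : Aᵀ * A = 1) : ‖A‖ ≤ 1 := by
  have hsq : ‖A‖ * ‖A‖ ≤ 1 := by
    rw [← l2_opNorm_conjTranspose_mul_self, conjTranspose_eq_transpose_of_trivial, hA,
      ← diagonal_one, l2_opNorm_diagonal]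
    exact pi_norm_const_le 1 |>.trans norm_one.le
  nlinarith [norm_nonneg A]

lemma norm_conj_diagonal_le {U : Matrix n n ℝ} (hU : Uᵀ * U = 1) (μ : n → ℝ) :
    ‖U * diagonal μ * Uᵀ‖ ≤ ‖μ‖ := by
  have hU' : ‖U‖ ≤ 1 := norm_le_one_of_transpose_mul_self hU
  have hUt : ‖Uᵀ‖ ≤ 1 :=
    norm_le_one_of_transpose_mul_self (by rw [transpose_transpose]; exact mul_eq_one_comm.1 hU)
  calc ‖U * diagonal μ * Uᵀ‖ ≤ ‖U‖ * ‖diagonal μ‖ * ‖Uᵀ‖ :=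
        (l2_opNorm_mul _ _).trans (by gcongr; exact l2_opNorm_mul _ _)
    _ ≤ 1 * ‖μ‖ * 1 := by rw [l2_opNorm_diagonal]; gcongr
    _ = ‖μ‖ := by ring

end L2OperatorNorm

section Frobenius

variable {m n : ℕ}

lemma frobSq_nonneg (A : Matrix (Fin m) (Fin n) ℝ) : 0 ≤ frobSq A := by
  unfold frobSq; positivity

lemma frobSq_le_mul_norm_sq (A : Matrix (Fin m) (Fin n) ℝ) : frobSq A ≤ n * ‖A‖ ^ 2 := by
  have hcol : ∀ j, ∑ i, A i j ^ 2 ≤ ‖A‖ ^ 2 := fun j => by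
    have h := mulVec_dotProduct_self_le A (Pi.single j 1)
    rw [mulVec_single_one, dotProduct_single, Pi.single_eq_same, mul_one, mul_one] at h
    simpa [dotProduct, sq] using h
  calc frobSq A = ∑ j, ∑ i, A i j ^ 2 := Finset.sum_comm
    _ ≤ ∑ _j : Fin n, ‖A‖ ^ 2 := Finset.sum_le_sum fun j _ => hcol j
    _ = n * ‖A‖ ^ 2 := by simp

lemma norm_le_sqrt_frobSq (A : Matrix (Fin m) (Fin n) ℝ) : ‖A‖ ≤ √(frobSq A) := by
  refine ContinuousLinearMap.opNorm_le_bound _ (Real.sqrt_nonneg _) fun x => ?_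
  have hrow : ∀ i, (A *ᵥ x.ofLp) i ^ 2 ≤ (∑ j, A i j ^ 2) * (x.ofLp ⬝ᵥ x.ofLp) := fun i =>
    calc (A *ᵥ x.ofLp) i ^ 2 = (∑ j, A i j * x.ofLp j) ^ 2 := rfl
      _ ≤ (∑ j, A i j ^ 2) * ∑ j, x.ofLp j ^ 2 := Finset.sum_mul_sq_le_sq_mul_sq _ _ _
      _ = _ := by simp [dotProduct, sq]
  have hsq : (A *ᵥ x.ofLp) ⬝ᵥ (A *ᵥ x.ofLp) ≤ frobSq A * (x.ofLp ⬝ᵥ x.ofLp) := by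
    simpa [dotProduct, ← sq, frobSq, Finset.sum_mul] using Finset.sum_le_sum fun i _ => hrow i
  rw [dotProduct_self_eq_norm_sq, dotProduct_self_eq_norm_sq] at hsq
  rw [← Real.sqrt_sq (norm_nonneg _), ← Real.sqrt_sq (norm_nonneg x),
    ← Real.sqrt_mul (frobSq_nonneg A)]
  exact Real.sqrt_le_sqrt hsq

end Frobenius

section Orthogonal

variable {m n : Type*} [Fintype m] [Fintype n] [DecidableEq n]

lemma mulVec_dotProduct_mulVec_of_transpose_mul_self {V : Matrix m n ℝ} (hV : Vᵀ * V = 1)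
    (x y : n → ℝ) :
    (V *ᵥ x) ⬝ᵥ (V *ᵥ y) = x ⬝ᵥ y := by
  rw [dotProduct_mulVec, ← vecMul_transpose, vecMul_vecMul, hV, vecMul_one]

omit [DecidableEq n] in
lemma dotProduct_mulVec_conj (M : Matrix m m ℝ) (V : Matrix m n ℝ) (c : n → ℝ) :
    (V *ᵥ c) ⬝ᵥ (M *ᵥ (V *ᵥ c)) = c ⬝ᵥ ((Vᵀ * M * V) *ᵥ c) := by
  rw [← mulVec_mulVec, ← mulVec_mulVec, dotProduct_mulVec c, vecMul_transpose]

lemma dotProduct_diagonal_mulVec (μ c : n → ℝ) :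
    c ⬝ᵥ (diagonal μ *ᵥ c) = ∑ j, μ j * c j ^ 2 := by
  simp only [dotProduct, mulVec_diagonal]
  exact Finset.sum_congr rfl fun j _ => by ring

lemma transpose_mul_conj_eq {U : Matrix n n ℝ} (hU : Uᵀ * U = 1) (D : Matrix n n ℝ) :
    Uᵀ * (U * D * Uᵀ) * U = D :=
  calc Uᵀ * (U * D * Uᵀ) * U = Uᵀ * U * D * (Uᵀ * U) := by simp only [Matrix.mul_assoc]
    _ = D := by rw [hU, Matrix.one_mul, Matrix.mul_one]

lemma conj_mul_conj {U : Matrix n n ℝ} (hU : Uᵀ * U = 1) (D₁ D₂ : Matrix n n ℝ) :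
    U * D₁ * Uᵀ * (U * D₂ * Uᵀ) = U * (D₁ * D₂) * Uᵀ :=
  calc U * D₁ * Uᵀ * (U * D₂ * Uᵀ) = U * D₁ * (Uᵀ * U) * D₂ * Uᵀ := by
        simp only [Matrix.mul_assoc]
    _ = U * (D₁ * D₂) * Uᵀ := by rw [hU, Matrix.mul_one, Matrix.mul_assoc U]

end Orthogonal

section Spectral

variable {p d₀ : ℕ} {A₀ : Matrix (Fin p) (Fin d₀) ℝ} {M U : Matrix (Fin p) (Fin p) ℝ}
  {lam : Fin p → ℝ}

lemma dotProduct_mulVec_eq_add (v : Fin p → ℝ) :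
    v ⬝ᵥ (M *ᵥ v) = (A₀ᵀ *ᵥ v) ⬝ᵥ (A₀ᵀ *ᵥ v) + v ⬝ᵥ ((M - A₀ * A₀ᵀ) *ᵥ v) := by
  rw [sub_mulVec, dotProduct_sub, ← mulVec_mulVec, dotProduct_mulVec v A₀, ← mulVec_transpose]
  ring

lemma neg_norm_mul_le_dotProduct_mulVec (v : Fin p → ℝ) :
    -‖M - A₀ * A₀ᵀ‖ * (v ⬝ᵥ v) ≤ v ⬝ᵥ (M *ᵥ v) := by
  rw [dotProduct_mulVec_eq_add (A₀ := A₀)]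
  have := (abs_le.1 (abs_dotProduct_mulVec_le (M - A₀ * A₀ᵀ) v)).1
  linarith [dotProduct_self_nonneg (A₀ᵀ *ᵥ v)]

lemma dotProduct_mulVec_le_norm_mul {v : Fin p → ℝ} (hv : A₀ᵀ *ᵥ v = 0) :
    v ⬝ᵥ (M *ᵥ v) ≤ ‖M - A₀ * A₀ᵀ‖ * (v ⬝ᵥ v) := by
  rw [dotProduct_mulVec_eq_add (A₀ := A₀), hv, zero_dotProduct, zero_add]
  exact (le_abs_self _).trans (abs_dotProduct_mulVec_le _ v)

lemma neg_norm_le_eigenvalue (hU : Uᵀ * U = 1) (hM : M = U * diagonal lam * Uᵀ) (i : Fin p) :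
    -‖M - A₀ * A₀ᵀ‖ ≤ lam i := by
  have hdiag : Uᵀ * M * U = diagonal lam := by rw [hM, transpose_mul_conj_eq hU]
  have h := neg_norm_mul_le_dotProduct_mulVec (A₀ := A₀) (M := M) (U *ᵥ Pi.single i 1)
  rw [dotProduct_mulVec_conj, hdiag, dotProduct_diagonal_mulVec,
    mulVec_dotProduct_mulVec_of_transpose_mul_self hU, dotProduct_single] at h
  simpa [Pi.single_apply] using h

/-- Courant–Fischer: test `M` on a nonzero vector in the span of the first `d₀ + 1` eigenvectors
that is orthogonal to the columns of `A₀`. -/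
lemma eigenvalue_le_norm (hU : Uᵀ * U = 1) (hlam : Antitone lam)
    (hM : M = U * diagonal lam * Uᵀ) {i : Fin p} (hi : d₀ ≤ (i : ℕ)) :
    lam i ≤ ‖M - A₀ * A₀ᵀ‖ := by
  have hk : d₀ + 1 ≤ p := by omega
  set e := Fin.castLE hk
  set V := U.submatrix id e
  have hV : Vᵀ * V = 1 := by
    rw [transpose_submatrix, ← submatrix_mul _ _ _ _ _ Function.bijective_id, hU,
      submatrix_one _ (Fin.castLE_injective hk)]
  have hVMV : Vᵀ * M * V = diagonal (lam ∘ e) := by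
    rw [← submatrix_diagonal _ _ (Fin.castLE_injective hk), ← transpose_mul_conj_eq hU
      (diagonal lam), ← hM]
    rfl
  obtain ⟨c, hc, hc0⟩ := (Submodule.ne_bot_iff _).1 <|
    LinearMap.ker_ne_bot_of_finrank_lt (f := mulVecLin (A₀ᵀ * V)) (by simp)
  have hv : A₀ᵀ *ᵥ (V *ᵥ c) = 0 := by rwa [mulVec_mulVec]
  have hlow : lam i * (c ⬝ᵥ c) ≤ (V *ᵥ c) ⬝ᵥ (M *ᵥ (V *ᵥ c)) := by
    rw [dotProduct_mulVec_conj, hVMV, dotProduct_diagonal_mulVec, dotProduct, Finset.mul_sum]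
    refine Finset.sum_le_sum fun j _ => ?_
    rw [← sq]
    exact mul_le_mul_of_nonneg_right (hlam (Fin.le_def.2 (by simp [e]; omega))) (sq_nonneg _)
  have hup := dotProduct_mulVec_le_norm_mul (M := M) hv
  rw [mulVec_dotProduct_mulVec_of_transpose_mul_self hV] at hup
  exact le_of_mul_le_mul_right (hlow.trans hup) (dotProduct_self_pos hc0)

lemma abs_eigenvalue_le_norm (hU : Uᵀ * U = 1) (hlam : Antitone lam)
    (hM : M = U * diagonal lam * Uᵀ) {i : Fin p} (hi : d₀ ≤ (i : ℕ)) :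
    |lam i| ≤ ‖M - A₀ * A₀ᵀ‖ :=
  abs_le.2 ⟨neg_norm_le_eigenvalue hU hM i, eigenvalue_le_norm hU hlam hM hi⟩

end Spectral

section Projection

variable {p k : ℕ}

lemma frobSq_eq_trace {m n : ℕ} (A : Matrix (Fin m) (Fin n) ℝ) : frobSq A = (Aᵀ * A).trace := by
  simp only [frobSq, trace, diag, mul_apply, transpose_apply, sq]
  exact Finset.sum_comm

lemma trace_mul_transpose_self {A : Matrix (Fin p) (Fin k) ℝ} (hA : Aᵀ * A = 1) :
    (A * Aᵀ).trace = k := by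
  rw [trace_mul_comm, hA, trace_one, Fintype.card_fin]

lemma mul_transpose_self_idem {A : Matrix (Fin p) (Fin k) ℝ} (hA : Aᵀ * A = 1) :
    A * Aᵀ * (A * Aᵀ) = A * Aᵀ := by
  rw [Matrix.mul_assoc, ← Matrix.mul_assoc Aᵀ, hA, Matrix.one_mul]

/-- Both sides equal `2k - 2 tr(Â Âᵀ A Aᵀ)`. -/
lemma frobSq_mul_transpose_sub_eq {Ahat A : Matrix (Fin p) (Fin k) ℝ} (hAhat : Ahatᵀ * Ahat = 1)
    (hA : Aᵀ * A = 1) :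
    frobSq (Ahat * Ahatᵀ - A * Aᵀ) = 2 * frobSq ((1 - Ahat * Ahatᵀ) * A) := by
  set Phat := Ahat * Ahatᵀ
  set P := A * Aᵀ
  have hsymm : Phatᵀ = Phat := by simp [Phat, transpose_mul]
  have hidem : Phat * Phat = Phat := mul_transpose_self_idem hAhat
  have hcompl : (1 - Phat) * (1 - Phat) = 1 - Phat := by
    rw [Matrix.sub_mul, Matrix.mul_sub, Matrix.mul_sub, hidem, Matrix.one_mul, Matrix.mul_one,
      Matrix.one_mul, sub_self, sub_zero]
  have hlhs : ((Phat - P)ᵀ * (Phat - P)).trace = 2 * k - 2 * (Phat * P).trace := by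
    rw [transpose_sub, hsymm, transpose_mul, transpose_transpose, Matrix.sub_mul, Matrix.mul_sub,
      Matrix.mul_sub, hidem, mul_transpose_self_idem hA, trace_sub, trace_sub, trace_sub,
      trace_mul_comm P, trace_mul_transpose_self hAhat, trace_mul_transpose_self hA]
    ring
  have hcross : (Aᵀ * (Phat * A)).trace = (Phat * P).trace := by
    rw [trace_mul_comm, Matrix.mul_assoc]
  have hrhs : (((1 - Phat) * A)ᵀ * ((1 - Phat) * A)).trace = k - (Phat * P).trace := by
    rw [transpose_mul, transpose_sub, transpose_one, hsymm, Matrix.mul_assoc,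
      ← Matrix.mul_assoc (1 - Phat), hcompl, Matrix.sub_mul, Matrix.one_mul, Matrix.mul_sub,
      trace_sub, hA, trace_one, Fintype.card_fin, hcross]
  rw [frobSq_eq_trace, frobSq_eq_trace, hlhs, hrhs]
  ring

lemma dF_eq_sqrt_frobSq {Ahat A : Matrix (Fin p) (Fin k) ℝ} (hAhat : Ahatᵀ * Ahat = 1)
    (hA : Aᵀ * A = 1) : dF Ahat A = √(frobSq ((1 - Ahat * Ahatᵀ) * A)) := by
  rw [dF, frobSq_mul_transpose_sub_eq hAhat hA]
  ring_nf

end Projection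

section DavisKahan

variable {p d₀ : ℕ} {A₀ : Matrix (Fin p) (Fin d₀) ℝ} {M U : Matrix (Fin p) (Fin p) ℝ}
  {lam : Fin p → ℝ}

lemma submatrix_transpose_mul_self {k : Type*} [Fintype k] [DecidableEq k] (hU : Uᵀ * U = 1)
    {e : k → Fin p} (he : Function.Injective e) : (U.submatrix id e)ᵀ * U.submatrix id e = 1 := by
  rw [transpose_submatrix, ← submatrix_mul _ _ _ _ _ Function.bijective_id, hU,
    submatrix_one _ he]

lemma submatrix_mul_transpose_self (h : d₀ ≤ p) (U : Matrix (Fin p) (Fin p) ℝ) :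
    U.submatrix id (Fin.castLE h) * (U.submatrix id (Fin.castLE h))ᵀ
      = U * diagonal (fun i : Fin p => if (i : ℕ) < d₀ then (1 : ℝ) else 0) * Uᵀ := by
  ext a b
  simp only [mul_apply, submatrix_apply, transpose_apply, id, diagonal_apply, mul_ite, mul_zero,
    Finset.sum_ite_eq', Finset.mem_univ, if_true]
  refine Fintype.sum_of_injective _ (Fin.castLE_injective h) _ _ (fun i hi => ?_) (fun j => ?_)
  · simp [if_neg fun hlt => hi ⟨⟨i, hlt⟩, rfl⟩]
  · simp

lemma one_sub_submatrix_mul_transpose_self (h : d₀ ≤ p) (hU : Uᵀ * U = 1) :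
    1 - U.submatrix id (Fin.castLE h) * (U.submatrix id (Fin.castLE h))ᵀ
      = U * diagonal (fun i : Fin p => if (i : ℕ) < d₀ then (0 : ℝ) else 1) * Uᵀ := by
  have hone : (1 : Matrix (Fin p) (Fin p) ℝ) = U * diagonal (fun _ => 1) * Uᵀ := by
    rw [diagonal_one, Matrix.mul_one, mul_eq_one_comm.1 hU]
  rw [submatrix_mul_transpose_self, hone, ← Matrix.sub_mul, ← Matrix.mul_sub, diagonal_sub]
  congr 3
  ext i
  split_ifs <;> simp

/-- The complementary spectral projection `Q` commutes with `M`, and `T = Q M` has norm at most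
`‖M - A₀A₀ᵀ‖` by the eigenvalue bounds; since `A₀ = A₀A₀ᵀA₀`,
`Q A₀ = T (Q A₀) - Q (M - A₀A₀ᵀ) A₀`. -/
lemma norm_one_sub_mul_le (h : d₀ ≤ p) (hA₀ : A₀ᵀ * A₀ = 1) (hU : Uᵀ * U = 1)
    (hlam : Antitone lam) (hM : M = U * diagonal lam * Uᵀ) :
    ‖(1 - U.submatrix id (Fin.castLE h) * (U.submatrix id (Fin.castLE h))ᵀ) * A₀‖
      ≤ 2 * ‖M - A₀ * A₀ᵀ‖ := by
  rw [one_sub_submatrix_mul_transpose_self h hU]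
  set ε := ‖M - A₀ * A₀ᵀ‖
  set τ : Fin p → ℝ := fun i => if (i : ℕ) < d₀ then 0 else 1
  set Q := U * diagonal τ * Uᵀ
  set T := U * diagonal (fun i => τ i * lam i) * Uᵀ
  have hτ : ‖τ‖ ≤ 1 := (pi_norm_le_iff_of_nonneg zero_le_one).2 fun i => by
    simp only [τ]; split_ifs <;> simp
  have hQ : ‖Q‖ ≤ 1 := (norm_conj_diagonal_le hU τ).trans hτ
  have hT : ‖T‖ ≤ ε := (norm_conj_diagonal_le hU _).trans <|
    (pi_norm_le_iff_of_nonneg (norm_nonneg _)).2 fun i => by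
      simp only [τ]
      split_ifs with hi
      · simp
      · simpa using abs_eigenvalue_le_norm hU hlam hM (not_lt.1 hi)
  have hA₀norm : ‖A₀‖ ≤ 1 := norm_le_one_of_transpose_mul_self hA₀
  have hQA₀ : ‖Q * A₀‖ ≤ 1 := (l2_opNorm_mul _ _).trans (by nlinarith [norm_nonneg Q])
  have hQM : Q * M = T * Q := by
    have hττ : (fun i => τ i * lam i * τ i) = fun i => τ i * lam i := by
      ext i; simp only [τ]; split_ifs <;> ring
    rw [hM, conj_mul_conj hU, conj_mul_conj hU, diagonal_mul_diagonal, diagonal_mul_diagonal, hττ]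
  clear_value Q T
  have hsplit : T * (Q * A₀) - Q * (M - A₀ * A₀ᵀ) * A₀ = Q * A₀ := by
    rw [← Matrix.mul_assoc T, ← hQM, Matrix.mul_sub, Matrix.sub_mul, sub_sub_cancel,
      Matrix.mul_assoc, Matrix.mul_assoc, hA₀, Matrix.mul_one]
  calc ‖Q * A₀‖ = ‖T * (Q * A₀) - Q * (M - A₀ * A₀ᵀ) * A₀‖ := by rw [hsplit]
    _ ≤ ‖T‖ * ‖Q * A₀‖ + ‖Q‖ * ‖M - A₀ * A₀ᵀ‖ * ‖A₀‖ := by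
        refine (norm_sub_le _ _).trans (add_le_add (l2_opNorm_mul _ _) ?_)
        exact (l2_opNorm_mul _ _).trans (by gcongr; exact l2_opNorm_mul _ _)
    _ ≤ ε * 1 + 1 * ε * 1 := by gcongr
    _ = 2 * ε := by ring

theorem dF_submatrix_le (h : d₀ ≤ p) (hA₀ : A₀ᵀ * A₀ = 1) (hU : Uᵀ * U = 1)
    (hlam : Antitone lam) (hM : M = U * diagonal lam * Uᵀ) :
    dF (U.submatrix id (Fin.castLE h)) A₀ ≤ 2 * √d₀ * ‖M - A₀ * A₀ᵀ‖ := by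
  rw [dF_eq_sqrt_frobSq (submatrix_transpose_mul_self hU (Fin.castLE_injective h)) hA₀]
  calc √(frobSq _) ≤ √(d₀ * (2 * ‖M - A₀ * A₀ᵀ‖) ^ 2) := by
        refine Real.sqrt_le_sqrt ((frobSq_le_mul_norm_sq _).trans ?_)
        gcongr
        exact norm_one_sub_mul_le h hA₀ hU hlam hM
    _ = 2 * √d₀ * ‖M - A₀ * A₀ᵀ‖ := by
        rw [Real.sqrt_mul (Nat.cast_nonneg _), Real.sqrt_sq (by positivity)]
        ring

theorem dF_submatrix_le_add (h : d₀ ≤ p) (hA₀ : A₀ᵀ * A₀ = 1) (hU : Uᵀ * U = 1)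
    (hlam : Antitone lam) (hM : M = U * diagonal lam * Uᵀ) (N : Matrix (Fin p) (Fin p) ℝ) :
    dF (U.submatrix id (Fin.castLE h)) A₀
      ≤ 2 * √d₀ * ‖N - A₀ * A₀ᵀ‖ + 2 * √d₀ * √(frobSq (M - N)) := by
  have hM' : ‖M - A₀ * A₀ᵀ‖ ≤ ‖N - A₀ * A₀ᵀ‖ + √(frobSq (M - N)) := by
    rw [add_comm]
    exact (norm_sub_le_norm_sub_add_norm_sub _ N _).trans
      (add_le_add_left (norm_le_sqrt_frobSq _) _)
  calc dF (U.submatrix id (Fin.castLE h)) A₀ ≤ 2 * √d₀ * ‖M - A₀ * A₀ᵀ‖ :=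
        dF_submatrix_le h hA₀ hU hlam hM
    _ ≤ 2 * √d₀ * (‖N - A₀ * A₀ᵀ‖ + √(frobSq (M - N))) := by gcongr
    _ = _ := by ring

end DavisKahan

lemma smul_sum_sub_apply {ι : Type*} [Fintype ι] {m n : ℕ} (c : ℝ)
    (Y : ι → Matrix (Fin m) (Fin n) ℝ) (Mbar : Matrix (Fin m) (Fin n) ℝ) (a : Fin m) (b : Fin n) :
    (c • ∑ i, Y i - Mbar) a b = c * ∑ i, Y i a b - Mbar a b := by
  simp [Matrix.sum_apply]

section EmpiricalMean

variable {Ω : Type*} [MeasurableSpace Ω] {μ : Measure Ω} [IsProbabilityMeasure μ]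

lemma integrable_sqrt_of_nonneg {f : Ω → ℝ} (hfi : Integrable f μ) (hf : 0 ≤ᵐ[μ] f) :
    Integrable (fun ω => √(f ω)) μ := by
  have hmeas := Real.continuous_sqrt.comp_aestronglyMeasurable hfi.1
  refine MemLp.integrable one_le_two ((memLp_two_iff_integrable_sq hmeas).2 (hfi.congr ?_))
  filter_upwards [hf] with ω hω using (Real.sq_sqrt hω).symm

lemma integral_sqrt_le_sqrt_integral {f : Ω → ℝ} (hfi : Integrable f μ) (hf : 0 ≤ᵐ[μ] f) :
    ∫ ω, √(f ω) ∂μ ≤ √(∫ ω, f ω ∂μ) :=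
  Real.strictConcaveOn_sqrt.concaveOn.le_map_integral Real.continuous_sqrt.continuousOn isClosed_Ici
    hf hfi (integrable_sqrt_of_nonneg hfi hf)

lemma integral_sq_average_sub_le {ι : Type*} [Fintype ι] [Nonempty ι] {X : ι → Ω → ℝ}
    (hX : ∀ i, MemLp (X i) 2 μ) (hindep : Pairwise fun i j => IndepFun (X i) (X j) μ)
    {m C : ℝ} (hmean : ∀ i, ∫ ω, X i ω ∂μ = m) (hvar : ∀ i, Var[X i; μ] ≤ C) :
    ∫ ω, ((Fintype.card ι : ℝ)⁻¹ * ∑ i, X i ω - m) ^ 2 ∂μ ≤ C / Fintype.card ι := by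
  have hn : (0 : ℝ) < Fintype.card ι := Nat.cast_pos.2 Fintype.card_pos
  set Y : Ω → ℝ := fun ω => (Fintype.card ι : ℝ)⁻¹ * (∑ i, X i) ω
  have hY : ∫ ω, Y ω ∂μ = m := by
    simp only [Y, Finset.sum_apply, integral_const_mul,
      integral_finsetSum _ fun i _ => (hX i).integrable one_le_two, hmean, Finset.sum_const,
      Finset.card_univ, nsmul_eq_mul]
    field_simp
  calc ∫ ω, ((Fintype.card ι : ℝ)⁻¹ * ∑ i, X i ω - m) ^ 2 ∂μ
      = ∫ ω, (Y ω - ∫ ω, Y ω ∂μ) ^ 2 ∂μ := by rw [hY]; simp [Y]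
    _ = (Fintype.card ι : ℝ)⁻¹ ^ 2 * ∑ i, Var[X i; μ] := by
        rw [← variance_eq_integral ((memLp_finsetSum' _ fun i _ => hX i).const_mul _).aemeasurable,
          variance_const_mul, IndepFun.variance_sum (fun i _ => hX i)
            fun i _ j _ hij => hindep hij]
    _ ≤ (Fintype.card ι : ℝ)⁻¹ ^ 2 * ∑ _i : ι, C := by gcongr with i; exact hvar i
    _ = C / Fintype.card ι := by
        rw [Finset.sum_const, Finset.card_univ, nsmul_eq_mul]
        field_simp

lemma variance_le_one_of_abs_le_one {Y : Ω → ℝ} (hY : AEStronglyMeasurable Y μ)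
    (hbound : ∀ᵐ ω ∂μ, |Y ω| ≤ 1) : Var[Y; μ] ≤ 1 := by
  refine (variance_le_expectation_sq hY).trans ?_
  calc ∫ ω, (Y ^ 2) ω ∂μ ≤ ∫ _ω, (1 : ℝ) ∂μ := by
        refine integral_mono_ae (MemLp.of_bound (p := 2) hY 1 hbound).integrable_sq
          (integrable_const 1) ?_
        filter_upwards [hbound] with ω hω
        simpa [sq_le_one_iff_abs_le_one] using hω
    _ = 1 := by simp

lemma measurable_matrix_apply {m n : ℕ} (a : Fin m) (b : Fin n) :
    Measurable fun M : Matrix (Fin m) (Fin n) ℝ => M a b :=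
  (measurable_pi_apply b).comp (measurable_pi_apply a)

variable {m n : ℕ} {ι : Type*} {X : ι → Ω → Matrix (Fin m) (Fin n) ℝ}

lemma memLp_apply_of_bound (hmeas : ∀ i, Measurable (X i))
    (hbound : ∀ i, ∀ᵐ ω ∂μ, ∀ a b, |X i ω a b| ≤ 1) (i : ι) (a : Fin m) (b : Fin n) :
    MemLp (fun ω => X i ω a b) 2 μ :=
  MemLp.of_bound ((measurable_matrix_apply a b).comp (hmeas i)).aestronglyMeasurable 1 <| by
    filter_upwards [hbound i] with ω hω using hω a b

variable [Fintype ι] {Mbar : Matrix (Fin m) (Fin n) ℝ}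

lemma memLp_average_sub_apply (hmeas : ∀ i, Measurable (X i))
    (hbound : ∀ i, ∀ᵐ ω ∂μ, ∀ a b, |X i ω a b| ≤ 1) (a : Fin m) (b : Fin n) :
    MemLp (fun ω => ((Fintype.card ι : ℝ)⁻¹ • ∑ i, X i ω - Mbar) a b) 2 μ := by
  simp only [smul_sum_sub_apply]
  exact ((memLp_finsetSum (f := fun i ω => X i ω a b) _ fun i _ =>
    memLp_apply_of_bound hmeas hbound i a b).const_mul _).sub (memLp_const (Mbar a b))

lemma integrable_frobSq_average_sub (hmeas : ∀ i, Measurable (X i))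
    (hbound : ∀ i, ∀ᵐ ω ∂μ, ∀ a b, |X i ω a b| ≤ 1) :
    Integrable (fun ω => frobSq ((Fintype.card ι : ℝ)⁻¹ • ∑ i, X i ω - Mbar)) μ :=
  integrable_finsetSum _ fun a _ => integrable_finsetSum _ fun b _ =>
    (memLp_average_sub_apply hmeas hbound a b).integrable_sq

lemma integral_frobSq_average_sub_le [Nonempty ι] (hmeas : ∀ i, Measurable (X i))
    (hindep : iIndepFun X μ) (hmean : ∀ i a b, ∫ ω, X i ω a b ∂μ = Mbar a b)
    (hbound : ∀ i, ∀ᵐ ω ∂μ, ∀ a b, |X i ω a b| ≤ 1) :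
    ∫ ω, frobSq ((Fintype.card ι : ℝ)⁻¹ • ∑ i, X i ω - Mbar) ∂μ ≤ m * n / Fintype.card ι := by
  have hentry : ∀ a b, ∫ ω, ((Fintype.card ι : ℝ)⁻¹ • ∑ i, X i ω - Mbar) a b ^ 2 ∂μ
      ≤ 1 / Fintype.card ι := fun a b => by
    simp only [smul_sum_sub_apply]
    refine integral_sq_average_sub_le (memLp_apply_of_bound hmeas hbound · a b)
      (fun i j hij => (hindep.indepFun hij).comp (measurable_matrix_apply a b)
        (measurable_matrix_apply a b)) (hmean · a b) fun i => ?_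
    exact variance_le_one_of_abs_le_one (memLp_apply_of_bound hmeas hbound i a b).1 <| by
      filter_upwards [hbound i] with ω hω using hω a b
  have hsq := fun a b => (memLp_average_sub_apply (Mbar := Mbar) hmeas hbound a b).integrable_sq
  calc ∫ ω, frobSq ((Fintype.card ι : ℝ)⁻¹ • ∑ i, X i ω - Mbar) ∂μ
      = ∑ a, ∑ b, ∫ ω, ((Fintype.card ι : ℝ)⁻¹ • ∑ i, X i ω - Mbar) a b ^ 2 ∂μ := by
        simp only [frobSq]
        rw [integral_finsetSum _ fun a _ => integrable_finsetSum _ fun b _ => hsq a b]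
        exact Finset.sum_congr rfl fun a _ => integral_finsetSum _ fun b _ => hsq a b
    _ ≤ ∑ _a : Fin m, ∑ _b : Fin n, 1 / (Fintype.card ι : ℝ) := by
        gcongr with a _ b; exact hentry a b
    _ = m * n / Fintype.card ι := by
        simp only [Finset.sum_const, Finset.card_univ, Fintype.card_fin, nsmul_eq_mul]
        ring

lemma integral_sqrt_frobSq_average_sub_le [Nonempty ι] (hmeas : ∀ i, Measurable (X i))
    (hindep : iIndepFun X μ) (hmean : ∀ i a b, ∫ ω, X i ω a b ∂μ = Mbar a b)
    (hbound : ∀ i, ∀ᵐ ω ∂μ, ∀ a b, |X i ω a b| ≤ 1) :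
    ∫ ω, √(frobSq ((Fintype.card ι : ℝ)⁻¹ • ∑ i, X i ω - Mbar)) ∂μ
      ≤ √(m * n / Fintype.card ι) :=
  (integral_sqrt_le_sqrt_integral (integrable_frobSq_average_sub hmeas hbound)
    (.of_forall fun _ => frobSq_nonneg _)).trans
    (Real.sqrt_le_sqrt (integral_frobSq_average_sub_le hmeas hindep hmean hbound))

lemma integral_le_add_mul_sqrt_of_le [Nonempty ι] (hmeas : ∀ i, Measurable (X i))
    (hindep : iIndepFun X μ) (hmean : ∀ i a b, ∫ ω, X i ω a b ∂μ = Mbar a b)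
    (hbound : ∀ i, ∀ᵐ ω ∂μ, ∀ a b, |X i ω a b| ≤ 1) {f : Ω → ℝ} {c₀ c₁ : ℝ} (hc₁ : 0 ≤ c₁)
    (hf₀ : ∀ ω, 0 ≤ f ω)
    (hf : ∀ ω, f ω ≤ c₀ + c₁ * √(frobSq ((Fintype.card ι : ℝ)⁻¹ • ∑ i, X i ω - Mbar))) :
    ∫ ω, f ω ∂μ ≤ c₀ + c₁ * √(m * n / Fintype.card ι) := by
  have hint := integrable_sqrt_of_nonneg (integrable_frobSq_average_sub (Mbar := Mbar) hmeas hbound)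
    (.of_forall fun _ => frobSq_nonneg _)
  calc ∫ ω, f ω ∂μ
      ≤ ∫ ω, (c₀ + c₁ * √(frobSq ((Fintype.card ι : ℝ)⁻¹ • ∑ i, X i ω - Mbar))) ∂μ :=
        integral_mono_of_nonneg (.of_forall hf₀) ((integrable_const _).add (hint.const_mul _))
          (.of_forall hf)
    _ = c₀ + c₁ * ∫ ω, √(frobSq ((Fintype.card ι : ℝ)⁻¹ • ∑ i, X i ω - Mbar)) ∂μ := by
        rw [integral_add (integrable_const _) (hint.const_mul _), integral_const,
          integral_const_mul, probReal_univ, one_smul]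
    _ ≤ c₀ + c₁ * √(m * n / Fintype.card ι) := by
        gcongr
        exact integral_sqrt_frobSq_average_sub_le hmeas hindep hmean hbound

end EmpiricalMean

lemma measurable_mul_transpose {p d : ℕ} :
    Measurable fun M : Matrix (Fin p) (Fin d) ℝ => M * Mᵀ := by
  refine measurable_pi_lambda _ fun a => measurable_pi_lambda _ fun b => ?_
  simp only [mul_apply, transpose_apply]
  exact Finset.measurable_sum _ fun k _ =>
    (measurable_matrix_apply a k).mul (measurable_matrix_apply b k)

lemma abs_mul_transpose_apply_le_one {p d : ℕ} {P : Matrix (Fin p) (Fin d) ℝ}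
    (hP : Pᵀ * P = 1) (a b : Fin p) : |(P * Pᵀ) a b| ≤ 1 := by
  have hnorm := norm_le_one_of_transpose_mul_self hP
  refine (abs_apply_le_norm _ a b).trans ((l2_opNorm_mul _ _).trans ?_)
  rw [← conjTranspose_eq_transpose_of_trivial, l2_opNorm_conjTranspose]
  nlinarith [norm_nonneg P]

theorem stmt0_general {Ω : Type*} [MeasureSpace Ω] [IsProbabilityMeasure (ℙ : Measure Ω)]
    (p d d₀ L : ℕ) (hL : 0 < L) (hd₀p : d₀ ≤ p)
    (A₀ : Matrix (Fin p) (Fin d₀) ℝ) (hA₀ : A₀ᵀ * A₀ = 1)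
    (P : Fin L → Ω → Matrix (Fin p) (Fin d) ℝ)
    (hmeas : ∀ ℓ, Measurable (P ℓ))
    (hindep : iIndepFun P (ℙ : Measure Ω))
    (hident : ∀ ℓ, IdentDistrib (P ℓ) (P ⟨0, hL⟩) (ℙ : Measure Ω) (ℙ : Measure Ω))
    (horth : ∀ ℓ, ∀ᵐ ω ∂(ℙ : Measure Ω), (P ℓ ω)ᵀ * P ℓ ω = 1)
    (PiInf : Matrix (Fin p) (Fin p) ℝ)
    (hPiInf : ∀ i j, PiInf i j = ∫ ω, (P ⟨0, hL⟩ ω * (P ⟨0, hL⟩ ω)ᵀ) i j ∂(ℙ : Measure Ω))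
    (PiHat : Ω → Matrix (Fin p) (Fin p) ℝ)
    (hPiHat : ∀ ω, PiHat ω = (L : ℝ)⁻¹ • ∑ ℓ, P ℓ ω * (P ℓ ω)ᵀ)
    (AhatL : Ω → Matrix (Fin p) (Fin d₀) ℝ)
    (hAhatL : ∀ ω, ∃ (U : Matrix (Fin p) (Fin p) ℝ) (lam : Fin p → ℝ),
      Uᵀ * U = 1 ∧ Antitone lam ∧ PiHat ω = U * Matrix.diagonal lam * Uᵀ ∧
      ∀ i j, AhatL ω i j = U i (Fin.castLE hd₀p j)) :
    ∫ ω, dF (AhatL ω) A₀ ∂(ℙ : Measure Ω)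
      ≤ 2 * Real.sqrt d₀ * opNorm (PiInf - A₀ * A₀ᵀ)
        + 2 * Real.sqrt d₀ * Real.sqrt (2 * Real.pi) * p / Real.sqrt L := by
  have : Nonempty (Fin L) := ⟨⟨0, hL⟩⟩
  rw [opNorm_eq_norm]
  set X : Fin L → Ω → Matrix (Fin p) (Fin p) ℝ := fun ℓ ω => P ℓ ω * (P ℓ ω)ᵀ
  have hXmeas : ∀ ℓ, Measurable (X ℓ) := fun ℓ => measurable_mul_transpose.comp (hmeas ℓ)
  have hXindep : iIndepFun X (ℙ : Measure Ω) :=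
    hindep.comp (fun _ M => M * Mᵀ) fun _ => measurable_mul_transpose
  have hXmean : ∀ ℓ a b, ∫ ω, X ℓ ω a b ∂(ℙ : Measure Ω) = PiInf a b := fun ℓ a b => by
    rw [hPiInf]
    exact ((hident ℓ).comp
      ((measurable_matrix_apply a b).comp measurable_mul_transpose)).integral_eq
  have hXbound : ∀ ℓ, ∀ᵐ ω ∂(ℙ : Measure Ω), ∀ a b, |X ℓ ω a b| ≤ 1 := fun ℓ =>
    (horth ℓ).mono fun ω hω => abs_mul_transpose_apply_le_one hω
  have hpoint : ∀ ω, dF (AhatL ω) A₀ ≤ 2 * √d₀ * ‖PiInf - A₀ * A₀ᵀ‖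
      + 2 * √d₀ * √(frobSq ((Fintype.card (Fin L) : ℝ)⁻¹ • ∑ ℓ, X ℓ ω - PiInf)) := fun ω => by
    obtain ⟨U, lam, hU, hlam, hdec, hcols⟩ := hAhatL ω
    rw [show AhatL ω = U.submatrix id (Fin.castLE hd₀p) from Matrix.ext hcols, Fintype.card_fin,
      ← hPiHat ω]
    exact dF_submatrix_le_add hd₀p hA₀ hU hlam hdec PiInf
  have h := integral_le_add_mul_sqrt_of_le hXmeas hXindep hXmean hXbound (by positivity)
    (fun _ => Real.sqrt_nonneg _) hpoint
  rw [Fintype.card_fin, Real.sqrt_div (by positivity), Real.sqrt_mul_self (by positivity)] at h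
  have hpi : 1 ≤ √(2 * Real.pi) := Real.one_le_sqrt.2 (by nlinarith [Real.pi_gt_three])
  refine h.trans ?_
  calc 2 * √d₀ * ‖PiInf - A₀ * A₀ᵀ‖ + 2 * √d₀ * (p / √L)
      = 2 * √d₀ * ‖PiInf - A₀ * A₀ᵀ‖ + 2 * √d₀ * 1 * p / √L := by ring
    _ ≤ _ := by gcongr

/-- Let `P₁, …, P_L` be i.i.d. random real `p × d` matrices with `Pℓᵀ Pℓ = I_d`
almost surely; set `Π^∞ = 𝔼[P₁ P₁ᵀ]` (entrywise expectation) and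
`Π̂ = (1/L) ∑ℓ Pℓ Pℓᵀ`.  Let `Â^L` be a measurably chosen random `p × d₀` matrix whose
columns are, for each outcome, orthonormal eigenvectors of the symmetric matrix `Π̂`
corresponding to its `d₀` largest eigenvalues counted with multiplicity (expressed here via
an orthogonal matrix `U` and a nonincreasing `lam : Fin p → ℝ` with
`Π̂ = U diagonal(lam) Uᵀ`, with `Â^L` consisting of the first `d₀` columns of `U`).  Then,
with `A₀ ∈ 𝒜_{p×d₀}`,
`𝔼[d_F(𝒮(Â^L), 𝒮(A₀))] ≤ 2 √d₀ ‖Π^∞ − A₀A₀ᵀ‖_op + 2 √d₀ √(2π) p / √L`. -/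
theorem stmt0 {Ω : Type*} [MeasureSpace Ω] [IsProbabilityMeasure (ℙ : Measure Ω)]
    (p d d₀ L : ℕ) (hp : 0 < p) (hd : 0 < d) (hd₀ : 0 < d₀) (hL : 0 < L) (hd₀p : d₀ ≤ p)
    (A₀ : Matrix (Fin p) (Fin d₀) ℝ) (hA₀ : A₀ᵀ * A₀ = 1)
    (P : Fin L → Ω → Matrix (Fin p) (Fin d) ℝ)
    (hmeas : ∀ ℓ, Measurable (P ℓ))
    (hindep : iIndepFun P (ℙ : Measure Ω))
    (hident : ∀ ℓ, IdentDistrib (P ℓ) (P ⟨0, hL⟩) (ℙ : Measure Ω) (ℙ : Measure Ω))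
    (horth : ∀ ℓ, ∀ᵐ ω ∂(ℙ : Measure Ω), (P ℓ ω)ᵀ * P ℓ ω = 1)
    (PiInf : Matrix (Fin p) (Fin p) ℝ)
    (hPiInf : ∀ i j, PiInf i j = ∫ ω, (P ⟨0, hL⟩ ω * (P ⟨0, hL⟩ ω)ᵀ) i j ∂(ℙ : Measure Ω))
    (PiHat : Ω → Matrix (Fin p) (Fin p) ℝ)
    (hPiHat : ∀ ω, PiHat ω = (L : ℝ)⁻¹ • ∑ ℓ, P ℓ ω * (P ℓ ω)ᵀ)
    (AhatL : Ω → Matrix (Fin p) (Fin d₀) ℝ)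
    (hAmeas : Measurable AhatL)
    (hAhatL : ∀ ω, ∃ (U : Matrix (Fin p) (Fin p) ℝ) (lam : Fin p → ℝ),
      Uᵀ * U = 1 ∧ Antitone lam ∧ PiHat ω = U * Matrix.diagonal lam * Uᵀ ∧
      ∀ i j, AhatL ω i j = U i (Fin.castLE hd₀p j)) :
    ∫ ω, dF (AhatL ω) A₀ ∂(ℙ : Measure Ω)
      ≤ 2 * Real.sqrt d₀ * opNorm (PiInf - A₀ * A₀ᵀ)
        + 2 * Real.sqrt d₀ * Real.sqrt (2 * Real.pi) * p / Real.sqrt L :=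
  stmt0_general p d d₀ L hL hd₀p A₀ hA₀ P hmeas hindep hident horth PiInf hPiInf PiHat hPiHat AhatL
    hAhatL
end

section
/- Let p, d, L be positive integers. On a probability space let P₁, …, P_L be independent and identically distributed random real p×d matrices such that almost surely Pℓᵀ Pℓ = I_d for every ℓ ∈ {1, …, L}. Set Π^∞ := 𝔼[P₁ P₁ᵀ] (entrywise expectation) and Π̂ := (1/L) Σ_{ℓ=1}^L Pℓ Pℓᵀ. Then 𝔼[ ‖Π̂ − Π^∞‖_op ] ≤ p (2π)^{1/2} / L^{1/2}. -/
open Matrix MeasureTheory ProbabilityTheory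
open scoped MeasureTheory ProbabilityTheory

/-! The operator norm is dominated by the Frobenius norm, so by Jensen's inequality for the
square root the expected error is at most the square root of the summed mean squares of the
entries of `Π̂ - Π^∞`. Since `Pℓ Pℓᵀ` is a symmetric idempotent, its entries lie in `[-1, 1]`;
each entry of `Π̂ - Π^∞` is therefore the deviation of an average of `L` independent variables
with values in `[-1, 1]` from their common mean, and its mean square is a variance of at most
`1 / L` (Popoviciu). This gives `𝔼 ‖Π̂ - Π^∞‖ ≤ p / √L`, and `1 ≤ √(2π)`. -/

namespace Matrix

variable {m n : Type*} [Fintype m] [Fintype n]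

theorem sq_apply_le_apply_self_of_isIdempotentElem {B : Matrix n n ℝ} (hsymm : B.IsSymm)
    (hidem : IsIdempotentElem B) (i j : n) : B i j ^ 2 ≤ B i i := by
  have hdiag : B i i = ∑ k, B i k ^ 2 := by
    conv_lhs => rw [← hidem.eq]
    refine Finset.sum_congr rfl fun k _ => ?_
    show B i k * B k i = B i k ^ 2
    rw [← hsymm.apply i k, sq]
  rw [hdiag]
  exact Finset.single_le_sum (f := fun k => B i k ^ 2) (fun k _ => sq_nonneg _)
    (Finset.mem_univ j)

theorem abs_apply_le_one_of_isIdempotentElem {B : Matrix n n ℝ} (hsymm : B.IsSymm)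
    (hidem : IsIdempotentElem B) (i j : n) : |B i j| ≤ 1 := by
  have hdiag_sq := sq_apply_le_apply_self_of_isIdempotentElem hsymm hidem i i
  have hdiag_le_one : B i i ≤ 1 := by nlinarith [hdiag_sq, sq_nonneg (B i i)]
  rw [← sq_le_one_iff_abs_le_one]
  exact (sq_apply_le_apply_self_of_isIdempotentElem hsymm hidem i j).trans hdiag_le_one

theorem mul_transpose_apply_mem_Icc [DecidableEq n] {A : Matrix m n ℝ} (h : Aᵀ * A = 1)
    (i j : m) : (A * Aᵀ) i j ∈ Set.Icc (-1) 1 := by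
  have hidem : IsIdempotentElem (A * Aᵀ) := by
    rw [IsIdempotentElem, Matrix.mul_assoc, ← Matrix.mul_assoc Aᵀ, h, Matrix.one_mul]
  exact abs_le.1 <| abs_apply_le_one_of_isIdempotentElem (by simp [IsSymm]) hidem i j

end Matrix

theorem opNorm_le_sqrt_sum_sq {p : ℕ} (M : Matrix (Fin p) (Fin p) ℝ) :
    opNorm M ≤ √(∑ i, ∑ j, M i j ^ 2) := by
  refine ContinuousLinearMap.opNorm_le_bound _ (Real.sqrt_nonneg _) fun x => ?_
  change ‖WithLp.toLp 2 (M *ᵥ x.ofLp)‖ ≤ _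
  rw [EuclideanSpace.norm_eq, EuclideanSpace.norm_eq, ← Real.sqrt_mul (by positivity)]
  refine Real.sqrt_le_sqrt ?_
  simp only [Real.norm_eq_abs, sq_abs, mulVec, dotProduct]
  rw [Finset.sum_mul]
  exact Finset.sum_le_sum fun i _ => Finset.sum_mul_sq_le_sq_mul_sq _ _ _

section Probability

variable {Ω : Type*} [MeasurableSpace Ω] {μ : Measure Ω}

theorem variance_inv_card_smul_sum_le {ι : Type*} [Fintype ι] {Y : ι → Ω → ℝ}
    (hY : ∀ i, MemLp (Y i) 2 μ) (hindep : Pairwise fun i j => Y i ⟂ᵢ[μ] Y j) {σ2 : ℝ}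
    (hvar : ∀ i, Var[Y i; μ] ≤ σ2) :
    Var[(Fintype.card ι : ℝ)⁻¹ • ∑ i, Y i; μ] ≤ σ2 / Fintype.card ι := by
  rw [variance_smul, IndepFun.variance_sum (fun i _ => hY i) fun i _ j _ hij => hindep hij]
  calc ((Fintype.card ι : ℝ)⁻¹) ^ 2 * ∑ i, Var[Y i; μ]
      ≤ ((Fintype.card ι : ℝ)⁻¹) ^ 2 * ∑ _i : ι, σ2 := by gcongr with i; exact hvar i
    _ = σ2 / Fintype.card ι := by
        rw [Finset.sum_const, Finset.card_univ, nsmul_eq_mul]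
        obtain h | h := eq_or_ne (Fintype.card ι : ℝ) 0
        · simp [h]
        · field_simp

variable [IsProbabilityMeasure μ]

theorem integral_opNorm_le_of_integral_sq_apply_le {p : ℕ} {D : Ω → Matrix (Fin p) (Fin p) ℝ}
    {c : ℝ} (hD : ∀ i j, MemLp (fun ω => D ω i j) 2 μ)
    (hc : ∀ i j, ∫ ω, D ω i j ^ 2 ∂μ ≤ c) :
    ∫ ω, opNorm (D ω) ∂μ ≤ p * √c := by
  set F : Ω → ℝ := fun ω => ∑ i, ∑ j, D ω i j ^ 2
  have hF : Integrable F μ :=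
    integrable_finsetSum _ fun i _ => integrable_finsetSum _ fun j _ => (hD i j).integrable_sq
  have hF_nonneg : ∀ ω, 0 ≤ F ω := fun ω => by positivity
  have hsqrtF : Integrable (fun ω => √(F ω)) μ := by
    refine ((memLp_two_iff_integrable_sq
      (Real.continuous_sqrt.comp_aestronglyMeasurable hF.1)).2 ?_).integrable one_le_two
    exact hF.congr (ae_of_all _ fun ω => (Real.sq_sqrt (hF_nonneg ω)).symm)
  have hintF : ∫ ω, F ω ∂μ ≤ p ^ 2 * c := by
    calc ∫ ω, F ω ∂μ = ∑ i, ∑ j, ∫ ω, D ω i j ^ 2 ∂μ := by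
          rw [integral_finsetSum _ fun i _ => integrable_finsetSum _ fun j _ =>
            (hD i j).integrable_sq]
          exact Finset.sum_congr rfl fun i _ =>
            integral_finsetSum _ fun j _ => (hD i j).integrable_sq
      _ ≤ ∑ _i : Fin p, ∑ _j : Fin p, c :=
          Finset.sum_le_sum fun i _ => Finset.sum_le_sum fun j _ => hc i j
      _ = p ^ 2 * c := by simp [sq, mul_assoc]
  calc ∫ ω, opNorm (D ω) ∂μ ≤ ∫ ω, √(F ω) ∂μ :=
        integral_mono_of_nonneg (ae_of_all _ fun _ => norm_nonneg _) hsqrtF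
          (ae_of_all _ fun ω => opNorm_le_sqrt_sum_sq (D ω))
    _ ≤ √(∫ ω, F ω ∂μ) :=
        Real.strictConcaveOn_sqrt.concaveOn.le_map_integral Real.continuous_sqrt.continuousOn
          isClosed_Ici (ae_of_all _ hF_nonneg) hF hsqrtF
    _ ≤ √(p ^ 2 * c) := Real.sqrt_le_sqrt hintF
    _ = p * √c := by rw [Real.sqrt_mul (by positivity), Real.sqrt_sq (Nat.cast_nonneg p)]

theorem integral_sq_inv_card_mul_sum_sub_le {ι : Type*} [Fintype ι] [Nonempty ι]
    {Y : ι → Ω → ℝ} {a b m : ℝ} (hindep : Pairwise fun i j => Y i ⟂ᵢ[μ] Y j)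
    (hY : ∀ i, AEMeasurable (Y i) μ) (hbound : ∀ i, ∀ᵐ ω ∂μ, Y i ω ∈ Set.Icc a b)
    (hmean : ∀ i, μ[Y i] = m) :
    ∫ ω, ((Fintype.card ι : ℝ)⁻¹ * ∑ i, Y i ω - m) ^ 2 ∂μ
      ≤ ((b - a) / 2) ^ 2 / Fintype.card ι := by
  have hYL2 i : MemLp (Y i) 2 μ := memLp_of_bounded (hbound i) (hY i).aestronglyMeasurable 2
  set X : Ω → ℝ := (Fintype.card ι : ℝ)⁻¹ • ∑ i, Y i with hX
  have hXmean : μ[X] = m := by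
    simp only [hX, Pi.smul_apply, Finset.sum_apply, smul_eq_mul]
    rw [integral_const_mul, integral_finsetSum _ fun i _ => (hYL2 i).integrable one_le_two]
    simp [hmean, Finset.card_univ]
  calc ∫ ω, ((Fintype.card ι : ℝ)⁻¹ * ∑ i, Y i ω - m) ^ 2 ∂μ = Var[X; μ] := by
        rw [variance_eq_integral ((memLp_finsetSum' Finset.univ fun i _ => hYL2 i).aemeasurable
          |>.const_smul (Fintype.card ι : ℝ)⁻¹), hXmean]
        simp
    _ ≤ ((b - a) / 2) ^ 2 / Fintype.card ι :=
        variance_inv_card_smul_sum_le hYL2 hindep fun i =>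
          variance_le_sq_of_bounded (hbound i) (hY i)

theorem integral_opNorm_inv_card_smul_sum_sub_le {ι : Type*} [Fintype ι] [Nonempty ι] {p : ℕ}
    {Q : ι → Ω → Matrix (Fin p) (Fin p) ℝ} {M : Matrix (Fin p) (Fin p) ℝ}
    (hindep : iIndepFun Q μ) (hQ : ∀ ℓ, AEMeasurable (Q ℓ) μ)
    (hbound : ∀ ℓ, ∀ᵐ ω ∂μ, ∀ i j, Q ℓ ω i j ∈ Set.Icc (-1) 1)
    (hmean : ∀ ℓ i j, ∫ ω, Q ℓ ω i j ∂μ = M i j) :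
    ∫ ω, opNorm ((Fintype.card ι : ℝ)⁻¹ • ∑ ℓ, Q ℓ ω - M) ∂μ ≤ p / √(Fintype.card ι) := by
  have hmeas_entry (i j : Fin p) : Measurable fun A : Matrix (Fin p) (Fin p) ℝ => A i j :=
    (measurable_pi_apply j).comp (measurable_pi_apply i)
  have hQL2 ℓ i j : MemLp (fun ω => Q ℓ ω i j) 2 μ :=
    memLp_of_bounded ((hbound ℓ).mono fun ω h => h i j)
      ((hmeas_entry i j).comp_aemeasurable (hQ ℓ)).aestronglyMeasurable 2
  have hD_apply ω i j : ((Fintype.card ι : ℝ)⁻¹ • ∑ ℓ, Q ℓ ω - M) i j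
      = (Fintype.card ι : ℝ)⁻¹ * ∑ ℓ, Q ℓ ω i j - M i j := by
    simp [Matrix.sum_apply]
  calc _ ≤ p * √(((1 - -1) / 2) ^ 2 / Fintype.card ι) := by
        refine integral_opNorm_le_of_integral_sq_apply_le (fun i j => ?_) (fun i j => ?_)
        · simp only [hD_apply]
          exact ((memLp_finsetSum Finset.univ fun ℓ _ => hQL2 ℓ i j).const_mul _).sub
            (memLp_const _)
        · simp only [hD_apply]
          exact integral_sq_inv_card_mul_sum_sub_le
            (fun ℓ ℓ' h => (hindep.comp _ fun _ => hmeas_entry i j).indepFun h)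
            (fun ℓ => (hmeas_entry i j).comp_aemeasurable (hQ ℓ))
            (fun ℓ => (hbound ℓ).mono fun ω h => h i j) (fun ℓ => hmean ℓ i j)
    _ = p / √(Fintype.card ι) := by norm_num [Real.sqrt_inv, div_eq_mul_inv]

end Probability

theorem stmt2_general {Ω : Type*} [MeasureSpace Ω] [IsProbabilityMeasure (ℙ : Measure Ω)]
    (p d L : ℕ) (hL : 0 < L)
    (P : Fin L → Ω → Matrix (Fin p) (Fin d) ℝ)
    (hindep : iIndepFun P (ℙ : Measure Ω))
    (hident : ∀ ℓ, IdentDistrib (P ℓ) (P ⟨0, hL⟩) (ℙ : Measure Ω) (ℙ : Measure Ω))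
    (horth : ∀ ℓ, ∀ᵐ ω ∂(ℙ : Measure Ω), (P ℓ ω)ᵀ * P ℓ ω = 1)
    (PiInf : Matrix (Fin p) (Fin p) ℝ)
    (hPiInf : ∀ i j, PiInf i j = ∫ ω, (P ⟨0, hL⟩ ω * (P ⟨0, hL⟩ ω)ᵀ) i j ∂(ℙ : Measure Ω))
    (PiHat : Ω → Matrix (Fin p) (Fin p) ℝ)
    (hPiHat : ∀ ω, PiHat ω = (L : ℝ)⁻¹ • ∑ ℓ, P ℓ ω * (P ℓ ω)ᵀ) :
    ∫ ω, opNorm (PiHat ω - PiInf) ∂(ℙ : Measure Ω)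
      ≤ p * Real.sqrt (2 * Real.pi) / Real.sqrt L := by
  have : Nonempty (Fin L) := ⟨⟨0, hL⟩⟩
  have hgram : Measurable fun A : Matrix (Fin p) (Fin d) ℝ => A * Aᵀ := by
    refine measurable_pi_lambda _ fun i => measurable_pi_lambda _ fun j => ?_
    simp only [mul_apply, transpose_apply]
    fun_prop
  have hmean ℓ i j : ∫ ω, (P ℓ ω * (P ℓ ω)ᵀ) i j ∂ℙ = PiInf i j := by
    rw [hPiInf]
    exact ((hident ℓ).comp hgram |>.comp
      ((measurable_pi_apply j).comp (measurable_pi_apply i))).integral_eq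
  calc ∫ ω, opNorm (PiHat ω - PiInf) ∂ℙ
      ≤ p / √(Fintype.card (Fin L)) := by
        simp_rw [hPiHat]
        simpa only [Fintype.card_fin, Function.comp_apply] using
          integral_opNorm_inv_card_smul_sum_sub_le (hindep.comp _ fun _ => hgram)
            (fun ℓ => hgram.comp_aemeasurable (hident ℓ).aemeasurable_fst)
            (fun ℓ => (horth ℓ).mono fun ω h => mul_transpose_apply_mem_Icc h) hmean
    _ ≤ p * √(2 * Real.pi) / √L := by
        rw [Fintype.card_fin]
        gcongr
        exact le_mul_of_one_le_right (Nat.cast_nonneg p)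
          (Real.one_le_sqrt.2 (by nlinarith [Real.pi_gt_three]))

/-- Let `P₁, …, P_L` be i.i.d. random real `p × d` matrices with `Pℓᵀ Pℓ = I_d`
almost surely. With `Π^∞ = 𝔼[P₁ P₁ᵀ]` (entrywise expectation) and
`Π̂ = (1/L) ∑ℓ Pℓ Pℓᵀ`, we have `𝔼[‖Π̂ − Π^∞‖_op] ≤ p √(2π) / √L`. -/
theorem stmt2 {Ω : Type*} [MeasureSpace Ω] [IsProbabilityMeasure (ℙ : Measure Ω)]
    (p d L : ℕ) (hp : 0 < p) (hd : 0 < d) (hL : 0 < L)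
    (P : Fin L → Ω → Matrix (Fin p) (Fin d) ℝ)
    (hmeas : ∀ ℓ, Measurable (P ℓ))
    (hindep : iIndepFun P (ℙ : Measure Ω))
    (hident : ∀ ℓ, IdentDistrib (P ℓ) (P ⟨0, hL⟩) (ℙ : Measure Ω) (ℙ : Measure Ω))
    (horth : ∀ ℓ, ∀ᵐ ω ∂(ℙ : Measure Ω), (P ℓ ω)ᵀ * P ℓ ω = 1)
    (PiInf : Matrix (Fin p) (Fin p) ℝ)
    (hPiInf : ∀ i j, PiInf i j = ∫ ω, (P ⟨0, hL⟩ ω * (P ⟨0, hL⟩ ω)ᵀ) i j ∂(ℙ : Measure Ω))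
    (PiHat : Ω → Matrix (Fin p) (Fin p) ℝ)
    (hPiHat : ∀ ω, PiHat ω = (L : ℝ)⁻¹ • ∑ ℓ, P ℓ ω * (P ℓ ω)ᵀ) :
    ∫ ω, opNorm (PiHat ω - PiInf) ∂(ℙ : Measure Ω)
      ≤ p * Real.sqrt (2 * Real.pi) / Real.sqrt L :=
  stmt2_general p d L hL P hindep hident horth PiInf hPiInf PiHat hPiHat
end
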